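/- arXiv:math/0606782 — 3 statements merged into one kernel-verified Lean document; each statement's English description precedes it below -/
import Mathlib

section
/- Let 0<q<1, let a>0 be a real number with a q < 1, and let n ≥ 1 be an integer. Then |1/(a q^n; q)_∞ − 1| ≤ a q^n / ((1 − q) · (a q; q)_∞). -/
/-- The infinite q-Pochhammer symbol `(a; q)_∞ = ∏_{k=0}^∞ (1 - a q^k)`. -/
noncomputable def qPochInf (a q : ℝ) : ℝ := ∏' k : ℕ, (1 - a * q ^ k)

/-!
For `0 ≤ u i ≤ 1` with `∑ u i < ∞`, the product `P = ∏ (1 - u i)` lies between `1 - ∑ u i`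
and `1`, and it decreases when the `u i` increase. Applied to `u k = a q^n q^k`, whose sum is
`a q^n / (1 - q)`, this gives `0 ≤ 1/P - 1 = (1 - P)/P ≤ (a q^n / (1 - q)) / (a q; q)_∞`,
since `a q^n ≤ a q` makes `(a q; q)_∞ ≤ P`.
-/

namespace Finset

theorem one_sub_sum_le_prod_one_sub {ι : Type*} (s : Finset ι) {u : ι → ℝ}
    (h0 : ∀ i ∈ s, 0 ≤ u i) (h1 : ∀ i ∈ s, u i ≤ 1) :
    1 - ∑ i ∈ s, u i ≤ ∏ i ∈ s, (1 - u i) := by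
  classical
  induction s using Finset.induction_on with
  | empty => simp
  | insert a s ha ih =>
    rw [prod_insert ha, sum_insert ha]
    have hs0 : ∀ i ∈ s, 0 ≤ u i := fun i hi => h0 i (mem_insert_of_mem hi)
    have hs1 : ∀ i ∈ s, u i ≤ 1 := fun i hi => h1 i (mem_insert_of_mem hi)
    have hprod_le : ∏ i ∈ s, (1 - u i) ≤ 1 :=
      prod_le_one (fun i hi => by linarith [hs1 i hi]) (fun i hi => by linarith [hs0 i hi])
    nlinarith [ih hs0 hs1, h0 a (mem_insert_self a s), h1 a (mem_insert_self a s)]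

end Finset

section ProdOneSub

variable {ι : Type*} {u v : ι → ℝ}

theorem Summable.multipliable_one_sub (hu : Summable u) : Multipliable fun i => 1 - u i := by
  simpa only [sub_eq_add_neg] using Real.multipliable_one_add_of_summable hu.neg

theorem tprod_one_sub_pos (hu : Summable u) (h1 : ∀ i, u i < 1) : 0 < ∏' i, (1 - u i) := by
  have hlog : Summable fun i => Real.log (1 - u i) := by
    simpa only [sub_eq_add_neg] using Real.summable_log_one_add_of_summable hu.neg
  rw [← Real.rexp_tsum_eq_tprod (fun i => sub_pos.mpr (h1 i)) hlog]
  exact Real.exp_pos _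

theorem tprod_one_sub_le_one (hu : Summable u) (h0 : ∀ i, 0 ≤ u i) (h1 : ∀ i, u i ≤ 1) :
    ∏' i, (1 - u i) ≤ 1 :=
  le_of_tendsto' hu.multipliable_one_sub.hasProd fun s =>
    Finset.prod_le_one (fun i _ => by linarith [h1 i]) (fun i _ => by linarith [h0 i])

theorem one_sub_tsum_le_tprod_one_sub (hu : Summable u) (h0 : ∀ i, 0 ≤ u i)
    (h1 : ∀ i, u i ≤ 1) : 1 - ∑' i, u i ≤ ∏' i, (1 - u i) :=
  ge_of_tendsto' hu.multipliable_one_sub.hasProd fun s =>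
    calc 1 - ∑' i, u i ≤ 1 - ∑ i ∈ s, u i := by gcongr; exact hu.sum_le_tsum s fun i _ => h0 i
      _ ≤ ∏ i ∈ s, (1 - u i) := s.one_sub_sum_le_prod_one_sub (fun i _ => h0 i) fun i _ => h1 i

theorem tprod_one_sub_le_tprod_one_sub (hv : Summable v) (h0 : ∀ i, 0 ≤ u i) (huv : ∀ i, u i ≤ v i)
    (hv1 : ∀ i, v i ≤ 1) : ∏' i, (1 - v i) ≤ ∏' i, (1 - u i) := by
  have hu : Summable u := hv.of_nonneg_of_le h0 huv
  refine le_of_tendsto_of_tendsto' hv.multipliable_one_sub.hasProd hu.multipliable_one_sub.hasProd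
    fun s => Finset.prod_le_prod (fun i _ => ?_) fun i _ => ?_
  · linarith [hv1 i]
  · linarith [huv i]

end ProdOneSub

section QPochhammer

variable {c d q : ℝ}

theorem summable_mul_geometric (c : ℝ) (hq0 : 0 ≤ q) (hq1 : q < 1) :
    Summable fun k : ℕ => c * q ^ k :=
  (summable_geometric_of_lt_one hq0 hq1).mul_left c

theorem mul_pow_le_self (hc : 0 ≤ c) (hq0 : 0 ≤ q) (hq1 : q ≤ 1) (k : ℕ) : c * q ^ k ≤ c :=
  mul_le_of_le_one_right hc (pow_le_one₀ hq0 hq1)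

theorem qPochInf_pos (hc0 : 0 ≤ c) (hc1 : c < 1) (hq0 : 0 ≤ q) (hq1 : q < 1) :
    0 < qPochInf c q :=
  tprod_one_sub_pos (summable_mul_geometric c hq0 hq1) fun k =>
    (mul_pow_le_self hc0 hq0 hq1.le k).trans_lt hc1

theorem qPochInf_le_one (hc0 : 0 ≤ c) (hc1 : c ≤ 1) (hq0 : 0 ≤ q) (hq1 : q < 1) :
    qPochInf c q ≤ 1 :=
  tprod_one_sub_le_one (summable_mul_geometric c hq0 hq1)
    (fun k => mul_nonneg hc0 (pow_nonneg hq0 k)) fun k => (mul_pow_le_self hc0 hq0 hq1.le k).trans hc1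

theorem qPochInf_le_qPochInf (hc0 : 0 ≤ c) (hcd : c ≤ d) (hd1 : d ≤ 1) (hq0 : 0 ≤ q) (hq1 : q < 1) :
    qPochInf d q ≤ qPochInf c q :=
  tprod_one_sub_le_tprod_one_sub (summable_mul_geometric d hq0 hq1)
    (fun k => mul_nonneg hc0 (pow_nonneg hq0 k))
    (fun k => mul_le_mul_of_nonneg_right hcd (pow_nonneg hq0 k))
    fun k => (mul_pow_le_self (hc0.trans hcd) hq0 hq1.le k).trans hd1

theorem one_sub_qPochInf_le (hc0 : 0 ≤ c) (hc1 : c ≤ 1) (hq0 : 0 ≤ q) (hq1 : q < 1) :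
    1 - qPochInf c q ≤ c / (1 - q) := by
  have hsum : ∑' k : ℕ, c * q ^ k = c / (1 - q) := by
    rw [tsum_mul_left, tsum_geometric_of_lt_one hq0 hq1, div_eq_mul_inv]
  have := one_sub_tsum_le_tprod_one_sub (summable_mul_geometric c hq0 hq1)
    (fun k => mul_nonneg hc0 (pow_nonneg hq0 k)) fun k => (mul_pow_le_self hc0 hq0 hq1.le k).trans hc1
  rw [hsum] at this
  unfold qPochInf
  linarith

end QPochhammer

theorem stmt1 (q a : ℝ) (hq0 : 0 < q) (hq1 : q < 1) (ha : 0 < a) (haq : a * q < 1)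
    (n : ℕ) (hn : 1 ≤ n) :
    |1 / qPochInf (a * q ^ n) q - 1| ≤ a * q ^ n / ((1 - q) * qPochInf (a * q) q) := by
  set x := a * q ^ n
  have hx0 : 0 ≤ x := by positivity
  have hxaq : x ≤ a * q :=
    mul_le_mul_of_nonneg_left (pow_le_of_le_one hq0.le hq1.le (by omega)) ha.le
  have hx1 : x ≤ 1 := hxaq.trans haq.le
  have hQ : 0 < qPochInf (a * q) q := qPochInf_pos (by positivity) haq hq0.le hq1
  have hQP : qPochInf (a * q) q ≤ qPochInf x q := qPochInf_le_qPochInf hx0 hxaq haq.le hq0.le hq1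
  have hP : 0 < qPochInf x q := hQ.trans_le hQP
  have hP1 : qPochInf x q ≤ 1 := qPochInf_le_one hx0 hx1 hq0.le hq1
  have hgap : 0 ≤ 1 - qPochInf x q := sub_nonneg.mpr hP1
  calc |1 / qPochInf x q - 1| = (1 - qPochInf x q) / qPochInf x q := by
        rw [abs_of_nonneg (by rw [sub_nonneg, le_div_iff₀ hP]; linarith)]
        field_simp
    _ ≤ (1 - qPochInf x q) / qPochInf (a * q) q := div_le_div_of_nonneg_left hgap hQ hQP
    _ ≤ x / (1 - q) / qPochInf (a * q) q := by
        gcongr; exact one_sub_qPochInf_le hx0 hx1 hq0.le hq1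
    _ = x / ((1 - q) * qPochInf (a * q) q) := div_div _ _ _
end

section
/- Let 0<q<1 and let z be a complex number. Then |A_q((1−q)z)| ≤ e^{q|z|}. -/
/-- The finite q-Pochhammer symbol `(q; q)_k = ∏_{j=1}^{k} (1 - q^j)`. -/
noncomputable def qPochK (a q : ℝ) (k : ℕ) : ℝ := ∏ j ∈ Finset.range k, (1 - a * q ^ j)

/-- Ramanujan's entire function `A_q(z) = ∑_{k=0}^∞ q^{k²} (-z)^k / (q;q)_k`. -/
noncomputable def Aq (q : ℝ) (z : ℂ) : ℂ :=
  ∑' k : ℕ, ((q : ℂ) ^ (k ^ 2) * (-z) ^ k / ((qPochK q q k : ℝ) : ℂ))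

/-!
Since `1 - q^(j+1) = (1 - q)(1 + q + ⋯ + q^j) ≥ (j + 1)(1 - q) q^j` and `q^k ≤ q^(j+1)` for
`j < k`, multiplying over `j < k` gives `k! (1 - q)^k q^(k²) ≤ q^k (q;q)_k`. Hence the `k`-th
term of `A_q((1 - q) z)` has norm at most `(q|z|)^k / k!`, the `k`-th term of the exponential
series of `q|z|`.
-/

open Finset

lemma qPochK_pos {q : ℝ} (hq0 : 0 ≤ q) (hq1 : q < 1) (k : ℕ) : 0 < qPochK q q k :=
  prod_pos fun j _ => by
    have : q * q ^ j < 1 := by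
      rw [← pow_succ']; exact pow_lt_one₀ hq0 hq1 j.succ_ne_zero
    linarith

lemma succ_mul_one_sub_mul_pow_le {q : ℝ} (hq0 : 0 ≤ q) (hq1 : q ≤ 1) (j : ℕ) :
    (j + 1 : ℝ) * (1 - q) * q ^ j ≤ 1 - q ^ (j + 1) := by
  have hsum : (j + 1 : ℝ) * q ^ j ≤ ∑ i ∈ range (j + 1), q ^ i := by
    calc (j + 1 : ℝ) * q ^ j = ∑ _i ∈ range (j + 1), q ^ j := by simp
      _ ≤ ∑ i ∈ range (j + 1), q ^ i := sum_le_sum fun i hi =>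
          pow_le_pow_of_le_one hq0 hq1 (Nat.lt_succ_iff.mp (mem_range.mp hi))
  calc (j + 1 : ℝ) * (1 - q) * q ^ j = (1 - q) * ((j + 1 : ℝ) * q ^ j) := by ring
    _ ≤ (1 - q) * ∑ i ∈ range (j + 1), q ^ i := by gcongr
    _ = 1 - q ^ (j + 1) := by rw [mul_comm, geom_sum_mul_neg]

lemma factorial_mul_pow_sq_le_pow_mul_qPochK {q : ℝ} (hq0 : 0 ≤ q) (hq1 : q ≤ 1) (k : ℕ) :
    (k.factorial : ℝ) * (1 - q) ^ k * q ^ (k ^ 2) ≤ q ^ k * qPochK q q k := by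
  have hlhs : (k.factorial : ℝ) * (1 - q) ^ k * q ^ (k ^ 2) =
      ∏ j ∈ range k, (j + 1 : ℝ) * (1 - q) * q ^ k := by
    rw [prod_mul_distrib, prod_mul_distrib, prod_const, prod_const, card_range, sq, pow_mul,
      ← prod_range_add_one_eq_factorial]
    push_cast; rfl
  have hrhs : q ^ k * qPochK q q k = ∏ j ∈ range k, q * (1 - q * q ^ j) := by
    rw [prod_mul_distrib, prod_const, card_range, qPochK]
  have h1q : 0 ≤ 1 - q := by linarith
  rw [hlhs, hrhs]
  refine prod_le_prod (fun j _ => by positivity) fun j hj => ?_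
  calc (j + 1 : ℝ) * (1 - q) * q ^ k ≤ (j + 1 : ℝ) * (1 - q) * q ^ (j + 1) :=
        mul_le_mul_of_nonneg_left (pow_le_pow_of_le_one hq0 hq1 (mem_range.mp hj)) (by positivity)
    _ = q * ((j + 1 : ℝ) * (1 - q) * q ^ j) := by ring
    _ ≤ q * (1 - q * q ^ j) := by
        rw [← pow_succ']; exact mul_le_mul_of_nonneg_left (succ_mul_one_sub_mul_pow_le hq0 hq1 j) hq0

lemma norm_Aq_term_le {q : ℝ} (hq0 : 0 ≤ q) (hq1 : q < 1) (z : ℂ) (k : ℕ) :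
    ‖(q : ℂ) ^ (k ^ 2) * (-(((1 - q : ℝ) : ℂ) * z)) ^ k / ((qPochK q q k : ℝ) : ℂ)‖ ≤
      (q * ‖z‖) ^ k / k.factorial := by
  have hpoch := qPochK_pos hq0 hq1 k
  rw [norm_div, norm_mul, norm_pow, norm_pow, norm_neg, norm_mul, Complex.norm_real,
    Complex.norm_real, Complex.norm_real, Real.norm_of_nonneg hq0,
    Real.norm_of_nonneg (by linarith : 0 ≤ 1 - q), Real.norm_of_nonneg hpoch.le,
    div_le_div_iff₀ hpoch (by positivity)]
  calc q ^ (k ^ 2) * ((1 - q) * ‖z‖) ^ k * k.factorial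
      = (k.factorial * (1 - q) ^ k * q ^ (k ^ 2)) * ‖z‖ ^ k := by rw [mul_pow]; ring
    _ ≤ (q ^ k * qPochK q q k) * ‖z‖ ^ k :=
        mul_le_mul_of_nonneg_right (factorial_mul_pow_sq_le_pow_mul_qPochK hq0 hq1.le k)
          (by positivity)
    _ = (q * ‖z‖) ^ k * qPochK q q k := by ring

theorem stmt8 (q : ℝ) (hq0 : 0 < q) (hq1 : q < 1) (z : ℂ) :
    ‖Aq q (((1 - q : ℝ) : ℂ) * z)‖ ≤ Real.exp (q * ‖z‖) := by
  have hexp : HasSum (fun k : ℕ => (q * ‖z‖) ^ k / k.factorial) (Real.exp (q * ‖z‖)) := by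
    rw [Real.exp_eq_exp_ℝ]
    exact NormedSpace.expSeries_div_hasSum_exp (q * ‖z‖)
  exact tsum_of_norm_bounded hexp (norm_Aq_term_le hq0.le hq1 z)
end

section
/- Let z be a complex number. Then A_q((1−q)z) tends to e^{−z} as q tends to 1 from below; that is, the limit as q → 1⁻ of ∑_{k=0}^∞ q^{k²} (−(1−q)z)^k / (q;q)_k equals e^{−z}. -/
/-!
Since `1 - q^j = (1 - q) [j]_q` with `[j]_q = 1 + q + ⋯ + q^{j-1}`, the factor `(1 - q)^k` coming
from `((1 - q) z)^k` cancels against `(q; q)_k = (1 - q)^k [k]_q!`, so the `k`-th term of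
`A_q((1 - q) z)` is `q^{k²} (-z)^k / [k]_q!`. As `q → 1⁻` it tends to `(-z)^k / k!`, and the bound
`[k]_q! ≥ k! q^{k²}` dominates it by `‖z‖^k / k!`; Tannery's theorem gives the limit `e^{-z}`.
-/

open Filter Topology Finset Nat

noncomputable def qFactorial (q : ℝ) (k : ℕ) : ℝ :=
  ∏ j ∈ range k, ∑ i ∈ range (j + 1), q ^ i

lemma qPochK_eq_one_sub_pow_mul_qFactorial (q : ℝ) (k : ℕ) :
    qPochK q q k = (1 - q) ^ k * qFactorial q k := by
  rw [qPochK, qFactorial, pow_eq_prod_const, ← prod_mul_distrib]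
  refine prod_congr rfl fun j _ => ?_
  linear_combination geom_sum_mul q (j + 1)

lemma qFactorial_one (k : ℕ) : qFactorial 1 k = k ! := by
  simp [qFactorial, ← prod_range_add_one_eq_factorial]

lemma continuous_qFactorial (k : ℕ) : Continuous (qFactorial · k) := by
  unfold qFactorial
  fun_prop

lemma qFactorial_pos {q : ℝ} (hq : 0 ≤ q) (k : ℕ) : 0 < qFactorial q k :=
  prod_pos fun j _ => sum_pos' (fun i _ => pow_nonneg hq i) ⟨0, by simp⟩

lemma factorial_mul_pow_le_qFactorial {q : ℝ} (h0 : 0 ≤ q) (h1 : q ≤ 1) (k : ℕ) :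
    k ! * q ^ (k ^ 2) ≤ qFactorial q k := by
  have hfactor : ∀ j ∈ range k, (j + 1 : ℝ) * q ^ k ≤ ∑ i ∈ range (j + 1), q ^ i := by
    intro j hj
    have := card_nsmul_le_sum (range (j + 1)) (q ^ ·) (q ^ k) fun i hi =>
      pow_le_pow_of_le_one h0 h1 (by simp at hi hj; omega)
    simpa using this
  calc (k ! : ℝ) * q ^ (k ^ 2) = ∏ j ∈ range k, ((j + 1 : ℝ) * q ^ k) := by
        rw [prod_mul_distrib, prod_const, card_range, ← pow_mul, ← sq]
        simp [← prod_range_add_one_eq_factorial]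
    _ ≤ qFactorial q k := prod_le_prod (fun j _ => by positivity) hfactor

noncomputable def qExpTerm (q : ℝ) (z : ℂ) (k : ℕ) : ℂ :=
  (q : ℂ) ^ (k ^ 2) * (-z) ^ k / (qFactorial q k : ℂ)

lemma Aq_one_sub_mul_eq_tsum_qExpTerm {q : ℝ} (hq : 0 ≤ q) (hq1 : q ≠ 1) (z : ℂ) :
    Aq q (((1 - q : ℝ) : ℂ) * z) = ∑' k, qExpTerm q z k := by
  refine tsum_congr fun k => ?_
  have h1q : (1 - q : ℂ) ≠ 0 := by exact_mod_cast sub_ne_zero.mpr hq1.symm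
  have hF : (qFactorial q k : ℂ) ≠ 0 := by exact_mod_cast (qFactorial_pos hq k).ne'
  rw [qExpTerm, qPochK_eq_one_sub_pow_mul_qFactorial, neg_mul_eq_mul_neg, mul_pow]
  push_cast
  field_simp

lemma tendsto_qExpTerm (z : ℂ) (k : ℕ) :
    Tendsto (qExpTerm · z k) (𝓝 1) (𝓝 ((-z) ^ k / k !)) := by
  have hF : Continuous fun q : ℝ => (qFactorial q k : ℂ) :=
    Complex.continuous_ofReal.comp (continuous_qFactorial k)
  have hcont : ContinuousAt (qExpTerm · z k) 1 :=
    (by fun_prop : Continuous fun q : ℝ => (q : ℂ) ^ (k ^ 2) * (-z) ^ k).continuousAt.div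
      hF.continuousAt (by simp [qFactorial_one, factorial_ne_zero])
  simpa [ContinuousAt, qExpTerm, qFactorial_one] using hcont

lemma norm_qExpTerm_le {q : ℝ} (h0 : 0 ≤ q) (h1 : q ≤ 1) (z : ℂ) (k : ℕ) :
    ‖qExpTerm q z k‖ ≤ ‖z‖ ^ k / k ! := by
  have hF := qFactorial_pos h0 k
  rw [qExpTerm, norm_div, norm_mul, norm_pow, norm_pow, norm_neg, Complex.norm_real,
    Complex.norm_real, Real.norm_of_nonneg h0, Real.norm_of_nonneg hF.le,
    div_le_div_iff₀ hF (by positivity)]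
  calc q ^ (k ^ 2) * ‖z‖ ^ k * k ! = ‖z‖ ^ k * (k ! * q ^ (k ^ 2)) := by ring
    _ ≤ ‖z‖ ^ k * qFactorial q k := by gcongr; exact factorial_mul_pow_le_qFactorial h0 h1 k

theorem stmt9 (z : ℂ) :
    Filter.Tendsto (fun q : ℝ => Aq q (((1 - q : ℝ) : ℂ) * z))
      (nhdsWithin 1 (Set.Iio 1)) (nhds (Complex.exp (-z))) := by
  have hq : ∀ᶠ q in 𝓝[<] (1 : ℝ), q ∈ Set.Ioo 0 1 := Ioo_mem_nhdsLT zero_lt_one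
  rw [Complex.exp_eq_exp_ℂ, NormedSpace.exp_eq_tsum_div]
  refine Tendsto.congr' ?_ (tendsto_tsum_of_dominated_convergence
    (Real.summable_pow_div_factorial ‖z‖)
    (fun k => (tendsto_qExpTerm z k).mono_left nhdsWithin_le_nhds) ?_)
  · filter_upwards [hq] with q hq
    exact (Aq_one_sub_mul_eq_tsum_qExpTerm hq.1.le hq.2.ne z).symm
  · filter_upwards [hq] with q hq k
    exact norm_qExpTerm_le hq.1.le hq.2.le z k
end
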